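/- arXiv:1511.01635 — 6 statements merged into one kernel-verified Lean document; each statement's English description precedes it below -/
import Mathlib

section
/- If a convex differentiable function f: ℝⁿ → ℝ with nonempty minimizer set 𝒳 satisfies the global error bound property with constant ν (i.e., ‖∇f(x)‖ ≥ ν·d(x,𝒳) for all x), then it satisfies the quadratic growth property with constant ν/2, i.e., f(x) − f* ≥ (ν/4)·d²(x,𝒳) for all x ∈ ℝⁿ. -/
/-!
Let `x` be at distance `D > 0` from the minimizers and `ε = f x - f*`. Ekeland's principle with
radius `D / 2` (in finite dimension: take a minimizer of `f + (2ε / D) * dist · x`) yields a point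
`y` within `D / 2` of `x` at which `f` is minimal up to the slope `2ε / D`, so `‖∇f y‖ ≤ 2ε / D`.
As `y` is still at distance at least `D / 2` from the minimizers, the error bound gives
`ν D / 2 ≤ 2ε / D`, that is `ε ≥ ν D² / 4`.
-/

open RealInnerProductSpace Metric Set Filter

abbrev Euc (n : ℕ) : Type := EuclideanSpace ℝ (Fin n)

theorem HasGradientAt.norm_le_of_forall_le_add_mul_dist {E : Type*}
    [NormedAddCommGroup E] [InnerProductSpace ℝ E] [CompleteSpace E]
    {f : E → ℝ} {v y : E} {κ : ℝ} (hf : HasGradientAt f v y) (hκ : 0 ≤ κ)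
    (hy : ∀ z, f y ≤ f z + κ * dist z y) : ‖v‖ ≤ κ := by
  have hline : HasLineDerivAt ℝ f (-‖v‖ ^ 2) y (-v) := by
    simpa [inner_neg_right, real_inner_self_eq_norm_sq] using
      hf.hasFDerivAt.hasLineDerivAt (-v)
  have hslope : -(κ * ‖v‖) ≤ -‖v‖ ^ 2 := by
    refine ge_of_tendsto hline.tendsto_slope_zero_right ?_
    filter_upwards [self_mem_nhdsWithin] with t (ht : 0 < t)
    have := hy (y + t • -v)
    rw [dist_eq_norm, add_sub_cancel_left, norm_smul, Real.norm_of_nonneg ht.le, norm_neg] at this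
    rw [smul_eq_mul, le_inv_mul_iff₀ ht]
    linarith
  rcases (norm_nonneg v).eq_or_lt with hv | hv
  · rw [← hv]; exact hκ
  · nlinarith

theorem Continuous.exists_dist_le_forall_le_add_mul_dist {α : Type*} [PseudoMetricSpace α]
    [ProperSpace α] {f : α → ℝ} (hf : Continuous f) {x : α} {ε r : ℝ} (hε : 0 < ε) (hr : 0 < r)
    (hx : ∀ z, f x ≤ f z + ε) : ∃ y, dist y x ≤ r ∧ ∀ z, f y ≤ f z + ε / r * dist z y := by
  have hκ : 0 < ε / r := div_pos hε hr
  have hcoer : Tendsto (fun z => f z + ε / r * dist z x) (cocompact α) atTop := by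
    refine tendsto_atTop_mono (fun z => ?_) <| tendsto_atTop_add_const_left _ (f x - ε)
      ((tendsto_dist_right_cocompact_atTop x).const_mul_atTop hκ)
    linarith [hx z]
  have : Nonempty α := ⟨x⟩
  have hcont : Continuous fun z => f z + ε / r * dist z x := by fun_prop
  obtain ⟨y, hy⟩ := hcont.exists_forall_le hcoer
  refine ⟨y, ?_, fun z => ?_⟩
  · have hyx : f y + ε / r * dist y x ≤ f x := by simpa using hy x
    have : ε / r * dist y x ≤ ε / r * r := by
      rw [div_mul_cancel₀ _ hr.ne']
      linarith [hx y]
    exact le_of_mul_le_mul_left this hκ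
  · linarith [hy z, mul_le_mul_of_nonneg_left (dist_triangle z y x) hκ.le]

theorem stmt_2_general {n : ℕ} (f : Euc n → ℝ) (f' : Euc n → Euc n)
    (hgrad : ∀ x, HasGradientAt f (f' x) x)
    (X : Set (Euc n)) (hX : X = {x | ∀ y, f x ≤ f y})
    (xs : Euc n) (hxs : xs ∈ X)
    (ν : ℝ) (hν : 0 < ν)
    (hGEB : ∀ x, ‖f' x‖ ≥ ν * Metric.infDist x X) :
    ∀ x, f x - f xs ≥ ν / 4 * (Metric.infDist x X) ^ 2 := by
  intro x
  have hmin : ∀ z, f xs ≤ f z := by rwa [hX] at hxs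
  rcases (infDist_nonneg (x := x) (s := X)).eq_or_lt with hD | hD
  · rw [← hD]
    linarith [hmin x]
  set D := infDist x X
  set ε := f x - f xs
  have hε : 0 < ε := by
    refine (sub_nonneg.2 (hmin x)).lt_of_ne fun hε => hD.ne' (infDist_zero_of_mem ?_)
    rw [hX]
    exact fun z => by linarith [hmin z]
  have hcont : Continuous f := Differentiable.continuous fun z => (hgrad z).differentiableAt
  obtain ⟨y, hyx, hy⟩ := hcont.exists_dist_le_forall_le_add_mul_dist (x := x) hε (half_pos hD)
    fun z => by linarith [hmin z]
  have hgy : ‖f' y‖ ≤ ε / (D / 2) :=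
    (hgrad y).norm_le_of_forall_le_add_mul_dist (by positivity) hy
  have hyX : D / 2 ≤ infDist y X := by
    linarith [infDist_le_infDist_add_dist (s := X) (x := x) (y := y), dist_comm x y]
  have hslope : ν * (D / 2) ≤ ε / (D / 2) :=
    (mul_le_mul_of_nonneg_left hyX hν.le).trans ((hGEB y).trans hgy)
  rw [le_div_iff₀ (half_pos hD)] at hslope
  linarith

theorem stmt_2 {n : ℕ} (f : Euc n → ℝ) (f' : Euc n → Euc n)
    (hconv : ConvexOn ℝ Set.univ f)
    (hgrad : ∀ x, HasGradientAt f (f' x) x)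
    (X : Set (Euc n)) (hX : X = {x | ∀ y, f x ≤ f y}) (hne : X.Nonempty)
    (xs : Euc n) (hxs : xs ∈ X)
    (ν : ℝ) (hν : 0 < ν)
    (hGEB : ∀ x, ‖f' x‖ ≥ ν * Metric.infDist x X) :
    ∀ x, f x - f xs ≥ ν / 4 * (Metric.infDist x X) ^ 2 :=
  stmt_2_general f f' hgrad X hX xs hxs ν hν hGEB
end

section
/- Let f be convex differentiable with L-Lipschitz gradient, g closed convex, φ = f + g with nonempty minimizer set 𝒳, and γ ≥ L. If the extended global error bound property holds with constants κ, ω (i.e., ‖G(y)‖ ≥ κ·d(y,𝒳) for all y with φ(y) ≤ φ* + ω), then the extended restricted strong convexity property holds with constants κ²/(2γ), ω: ⟨G(y), y − proj_𝒳(y)⟩ ≥ (κ²/(2γ))·d²(y,𝒳) for all y in the sublevel set. -/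
open RealInnerProductSpace Metric Set Filter

/-! Write `P = p y` and `G = γ • (y - P)`. Minimality of `P` for the prox model makes
`G - ∇f y` a subgradient of `g` at `P`; adding the gradient inequality of the convex `f` at `y`
and the descent lemma for its `L`-Lipschitz gradient gives, for every `x` with `g x < ⊤`,
`φ x - φ P ≥ ⟪G, x - y⟫ + (γ - L/2) ‖y - P‖² ≥ ⟪G, x - y⟫ + ‖G‖² / (2γ)`.
For a minimizer `x = q` the left side is nonpositive, so
`⟪G, y - q⟫ ≥ ‖G‖² / (2γ) ≥ κ² d(y, 𝒳)² / (2γ)` by the error bound. -/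

namespace EReal

lemma ne_top_of_coe_add_le {a : ℝ} {u w : EReal} (h : (a : EReal) + u ≤ w) (hw : w ≠ ⊤) :
    u ≠ ⊤ := by
  rintro rfl
  exact hw (top_le_iff.1 (coe_add_top a ▸ h))

lemma add_toReal_le_of_coe_add_le {a b : ℝ} {u v : EReal} (hu : u ≠ ⊥) (hv : v ≠ ⊤)
    (h : (a : EReal) + u ≤ b + v) : a + u.toReal ≤ b + v.toReal := by
  induction u using EReal.rec <;> induction v using EReal.rec <;>
    simp_all [← EReal.coe_add]

end EReal

section

variable {E : Type*} [NormedAddCommGroup E] [NormedSpace ℝ E] {g : E → EReal}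

lemma toReal_sub_le_toReal_of_hasFDerivAt_of_forall_le
    (hgconv : ∀ x y : E, ∀ a b : ℝ, 0 ≤ a → 0 ≤ b → a + b = 1 →
      g (a • x + b • y) ≤ (a : EReal) * g x + (b : EReal) * g y)
    (hgbot : ∀ x, g x ≠ ⊥) {s : E → ℝ} {s' : E →L[ℝ] ℝ} {P : E} (hs : HasFDerivAt s s' P)
    (hP : ∀ x, (s P : EReal) + g P ≤ s x + g x) {q : E} (hq : g q ≠ ⊤) :
    (g P).toReal - s' (q - P) ≤ (g q).toReal := by
  have hPtop : g P ≠ ⊤ :=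
    EReal.ne_top_of_coe_add_le (hP q) (EReal.add_ne_top (EReal.coe_ne_top _) hq)
  -- `s P + g P ≤ s (P + t (q - P)) + (1 - t) g P + t g q`, divided by `t`, then `t → 0⁺`
  have hsegment : ∀ t ∈ Ioo (0 : ℝ) 1,
      (g P).toReal - (g q).toReal ≤ t⁻¹ • (s (P + t • (q - P)) - s P) := by
    rintro t ⟨ht0, ht1⟩
    have hgseg := hgconv P q (1 - t) t (by linarith) ht0.le (by ring)
    rw [← EReal.coe_toReal hPtop (hgbot P), ← EReal.coe_toReal hq (hgbot q),
      ← EReal.coe_mul, ← EReal.coe_mul, ← EReal.coe_add] at hgseg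
    have hmin := (hP _).trans (add_le_add_right hgseg _)
    rw [show (1 - t) • P + t • q = P + t • (q - P) by module,
      ← EReal.coe_toReal hPtop (hgbot P)] at hmin
    have hreal := EReal.add_toReal_le_of_coe_add_le (EReal.coe_ne_bot _) (EReal.coe_ne_top _) hmin
    simp only [EReal.toReal_coe] at hreal
    rw [smul_eq_mul, le_inv_mul_iff₀ ht0]
    linarith
  have hlim := ge_of_tendsto (hs.hasLineDerivAt (q - P)).tendsto_slope_zero_right <|
    eventually_of_mem (Ioo_mem_nhdsGT one_pos) hsegment
  linarith

end

section

variable {E : Type*} [NormedAddCommGroup E] [InnerProductSpace ℝ E] {g : E → EReal}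

lemma toReal_add_inner_le_toReal_of_forall_le
    (hgconv : ∀ x y : E, ∀ a b : ℝ, 0 ≤ a → 0 ≤ b → a + b = 1 →
      g (a • x + b • y) ≤ (a : EReal) * g x + (b : EReal) * g y)
    (hgbot : ∀ x, g x ≠ ⊥) {a γ : ℝ} {c y P : E}
    (hP : ∀ x, ((a + ⟪c, P - y⟫ + γ / 2 * ‖P - y‖ ^ 2 : ℝ) : EReal) + g P
        ≤ ((a + ⟪c, x - y⟫ + γ / 2 * ‖x - y‖ ^ 2 : ℝ) : EReal) + g x)
    {q : E} (hq : g q ≠ ⊤) :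
    (g P).toReal + ⟪γ • (y - P) - c, q - P⟫ ≤ (g q).toReal := by
  have hsub := (hasFDerivAt_id (𝕜 := ℝ) P).sub_const y
  have hs := ((hasFDerivAt_const a P).fun_add ((innerSL ℝ c).hasFDerivAt.comp P hsub)).fun_add
    (hsub.norm_sq.const_mul (γ / 2))
  have := toReal_sub_le_toReal_of_hasFDerivAt_of_forall_le hgconv hgbot hs hP hq
  simp only [ContinuousLinearMap.comp_id, zero_add, id_eq, add_apply, coe_innerSL_apply, smul_apply,
    nsmul_eq_mul, Nat.cast_ofNat, smul_eq_mul] at this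
  rw [inner_sub_left, real_inner_smul_left, ← neg_sub P y, inner_neg_left]
  linarith

end

section

variable {E : Type*} [NormedAddCommGroup E] [InnerProductSpace ℝ E] [CompleteSpace E]
  {g : E → EReal}

lemma HasGradientAt.hasDerivAt_add_smul {f : E → ℝ} {f' x d : E} {t : ℝ}
    (hf : HasGradientAt f f' (x + t • d)) :
    HasDerivAt (fun s : ℝ => f (x + s • d)) ⟪f', d⟫ t := by
  have hline : HasDerivAt (fun s : ℝ => x + s • d) d t := by
    simpa using ((hasDerivAt_id t).smul_const d).const_add x
  have h := hf.hasFDerivAt.comp_hasDerivAt t hline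
  simp only [InnerProductSpace.toDual_apply_apply] at h
  exact h

lemma ConvexOn.add_inner_gradient_le {f : E → ℝ} {f' x : E} (hf : ConvexOn ℝ univ f)
    (hx : HasGradientAt f f' x) (y : E) : f x + ⟪f', y - x⟫ ≤ f y := by
  have hline : ConvexOn ℝ univ (fun t : ℝ => f (x + t • (y - x))) := by
    simpa [Function.comp_def, AffineMap.lineMap_apply, add_comm]
      using hf.comp_affineMap (AffineMap.lineMap x y)
  have hderiv := hline.le_slope_of_hasDerivAt (mem_univ 0) (mem_univ 1) one_pos
    (HasGradientAt.hasDerivAt_add_smul (t := 0) (by simpa using hx))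
  simp only [slope_def_field, one_smul, add_sub_cancel, zero_smul, add_zero, sub_zero,
    div_one] at hderiv
  linarith

lemma le_add_inner_gradient_add_sq_of_lipschitz {f : E → ℝ} {f' : E → E} {L : ℝ}
    (hf : ∀ x, HasGradientAt f (f' x) x) (hLip : ∀ x y, ‖f' x - f' y‖ ≤ L * ‖x - y‖)
    (x y : E) : f y ≤ f x + ⟪f' x, y - x⟫ + L / 2 * ‖y - x‖ ^ 2 := by
  set d := y - x
  set h : ℝ → ℝ := fun t => f (x + t • d) - t * ⟪f' x, d⟫ - L / 2 * ‖d‖ ^ 2 * t ^ 2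
  have hderiv (t : ℝ) :
      HasDerivAt h (⟪f' (x + t • d), d⟫ - ⟪f' x, d⟫ - L / 2 * ‖d‖ ^ 2 * (2 * t)) t := by
    have := (((hf (x + t • d)).hasDerivAt_add_smul (x := x)).fun_sub
      ((hasDerivAt_id t).mul_const ⟪f' x, d⟫)).fun_sub
      ((hasDerivAt_pow 2 t).const_mul (L / 2 * ‖d‖ ^ 2))
    simpa using this
  have hanti : AntitoneOn h (Ici 0) := by
    refine antitoneOn_of_hasDerivWithinAt_nonpos (convex_Ici 0)
      (fun t _ => (hderiv t).continuousAt.continuousWithinAt)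
      (fun t _ => (hderiv t).hasDerivWithinAt) fun t ht => ?_
    rw [interior_Ici, mem_Ioi] at ht
    have hcs : ⟪f' (x + t • d) - f' x, d⟫ ≤ L * t * ‖d‖ ^ 2 := calc
      _ ≤ ‖f' (x + t • d) - f' x‖ * ‖d‖ := real_inner_le_norm _ _
      _ ≤ L * ‖t • d‖ * ‖d‖ := by
        gcongr
        simpa using hLip (x + t • d) x
      _ = L * t * ‖d‖ ^ 2 := by rw [norm_smul, Real.norm_of_nonneg ht.le]; ring
    rw [inner_sub_left] at hcs
    linarith
  have := hanti (mem_Ici.2 le_rfl) (mem_Ici.2 zero_le_one) zero_le_one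
  simp only [h, d, one_smul, add_sub_cancel, one_mul, one_pow, mul_one, zero_smul, add_zero,
    zero_mul, sub_zero, ne_eq, OfNat.ofNat_ne_zero, not_false_eq_true, zero_pow, mul_zero] at this
  linarith

lemma inner_add_norm_sq_div_le_sub
    (hgconv : ∀ x y : E, ∀ a b : ℝ, 0 ≤ a → 0 ≤ b → a + b = 1 →
      g (a • x + b • y) ≤ (a : EReal) * g x + (b : EReal) * g y)
    (hgbot : ∀ x, g x ≠ ⊥) {f : E → ℝ} {f' : E → E} {L γ : ℝ} (hf : ConvexOn ℝ univ f)
    (hgrad : ∀ x, HasGradientAt f (f' x) x) (hLip : ∀ x y, ‖f' x - f' y‖ ≤ L * ‖x - y‖)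
    (hγ : 0 < γ) (hLγ : L ≤ γ) {y P : E}
    (hP : ∀ x, ((f y + ⟪f' y, P - y⟫ + γ / 2 * ‖P - y‖ ^ 2 : ℝ) : EReal) + g P
        ≤ ((f y + ⟪f' y, x - y⟫ + γ / 2 * ‖x - y‖ ^ 2 : ℝ) : EReal) + g x)
    {x : E} (hx : g x ≠ ⊤) :
    ⟪γ • (y - P), x - y⟫ + ‖γ • (y - P)‖ ^ 2 / (2 * γ)
      ≤ f x + (g x).toReal - (f P + (g P).toReal) := by
  have hprox := toReal_add_inner_le_toReal_of_forall_le hgconv hgbot hP hx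
  have hconv := hf.add_inner_gradient_le (hgrad y) x
  have hdescent := le_add_inner_gradient_add_sq_of_lipschitz hgrad hLip y P
  have hnorm : ‖γ • (y - P)‖ ^ 2 / (2 * γ) = γ / 2 * ‖y - P‖ ^ 2 := by
    rw [norm_smul, Real.norm_of_nonneg hγ.le]
    field_simp
  rw [show x - P = (x - y) + (y - P) by abel, inner_sub_left, inner_add_right, inner_add_right,
    real_inner_smul_left, real_inner_smul_left, real_inner_self_eq_norm_sq] at hprox
  rw [← neg_sub y P, inner_neg_right, norm_neg] at hdescent
  rw [real_inner_smul_left, hnorm]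
  linarith [mul_nonneg (sub_nonneg.2 hLγ) (sq_nonneg ‖y - P‖)]

end

theorem stmt_4_general {n : ℕ} (L γ : ℝ) (hL : 0 < L) (hγ : γ ≥ L)
    (f : Euc n → ℝ) (f' : Euc n → Euc n) (g : Euc n → EReal)
    (hconv : ConvexOn ℝ Set.univ f)
    (hgrad : ∀ x, HasGradientAt f (f' x) x)
    (hLip : ∀ x y, ‖f' x - f' y‖ ≤ L * ‖x - y‖)
    (hgbot : ∀ x, g x ≠ ⊥)
    (hgconv : ∀ x y : Euc n, ∀ a b : ℝ, 0 ≤ a → 0 ≤ b → a + b = 1 →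
      g (a • x + b • y) ≤ (a : EReal) * g x + (b : EReal) * g y)
    (p : Euc n → Euc n)
    (hp : ∀ xb x, ((f xb + ⟪f' xb, p xb - xb⟫ + γ / 2 * ‖p xb - xb‖ ^ 2 : ℝ) : EReal) + g (p xb)
        ≤ ((f xb + ⟪f' xb, x - xb⟫ + γ / 2 * ‖x - xb‖ ^ 2 : ℝ) : EReal) + g x)
    (X : Set (Euc n))
    (hX : X = {x | ∀ y, (f x : EReal) + g x ≤ (f y : EReal) + g y})
    (xs : Euc n)
    (fstar : ℝ) (hstar : (f xs : EReal) + g xs = (fstar : ℝ))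
    (κ ω : ℝ) (hκ : 0 < κ)
    (heGEB : ∀ y, (f y : EReal) + g y ≤ ((fstar + ω : ℝ) : EReal) →
      ‖γ • (y - p y)‖ ≥ κ * Metric.infDist y X) :
    ∀ y, (f y : EReal) + g y ≤ ((fstar + ω : ℝ) : EReal) →
      ∀ q ∈ X, dist y q = Metric.infDist y X →
        ⟪γ • (y - p y), y - q⟫ ≥ κ ^ 2 / (2 * γ) * (Metric.infDist y X) ^ 2 := by
  intro y hy q hq _
  have hγ0 : 0 < γ := hL.trans_le hγ
  have hq_min : ∀ z, (f q : EReal) + g q ≤ f z + g z := by rw [hX] at hq; exact hq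
  have hgq : g q ≠ ⊤ := EReal.ne_top_of_coe_add_le (hstar ▸ hq_min xs) (EReal.coe_ne_top _)
  have hgp : g (p y) ≠ ⊤ :=
    EReal.ne_top_of_coe_add_le (hp y q) (EReal.add_ne_top (EReal.coe_ne_top _) hgq)
  have hq_le_p := EReal.add_toReal_le_of_coe_add_le (hgbot q) hgp (hq_min (p y))
  have hdescent := inner_add_norm_sq_div_le_sub hgconv hgbot hconv hgrad hLip hγ0 hγ (hp y) hgq
  have hdist : κ * infDist y X ≤ ‖γ • (y - p y)‖ := heGEB y hy
  calc κ ^ 2 / (2 * γ) * infDist y X ^ 2 = (κ * infDist y X) ^ 2 / (2 * γ) := by ring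
    _ ≤ ‖γ • (y - p y)‖ ^ 2 / (2 * γ) := by gcongr; exact mul_nonneg hκ.le infDist_nonneg
    _ ≤ ⟪γ • (y - p y), y - q⟫ := by
      rw [← neg_sub q y, inner_neg_right]
      linarith

theorem stmt_4 {n : ℕ} (L γ : ℝ) (hL : 0 < L) (hγ : γ ≥ L)
    (f : Euc n → ℝ) (f' : Euc n → Euc n) (g : Euc n → EReal)
    (hconv : ConvexOn ℝ Set.univ f)
    (hgrad : ∀ x, HasGradientAt f (f' x) x)
    (hLip : ∀ x y, ‖f' x - f' y‖ ≤ L * ‖x - y‖)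
    (hgbot : ∀ x, g x ≠ ⊥) (hgtop : ∃ x, g x ≠ ⊤)
    (hglsc : LowerSemicontinuous g)
    (hgconv : ∀ x y : Euc n, ∀ a b : ℝ, 0 ≤ a → 0 ≤ b → a + b = 1 →
      g (a • x + b • y) ≤ (a : EReal) * g x + (b : EReal) * g y)
    (p : Euc n → Euc n)
    (hp : ∀ xb x, ((f xb + ⟪f' xb, p xb - xb⟫ + γ / 2 * ‖p xb - xb‖ ^ 2 : ℝ) : EReal) + g (p xb)
        ≤ ((f xb + ⟪f' xb, x - xb⟫ + γ / 2 * ‖x - xb‖ ^ 2 : ℝ) : EReal) + g x)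
    (X : Set (Euc n))
    (hX : X = {x | ∀ y, (f x : EReal) + g x ≤ (f y : EReal) + g y})
    (hne : X.Nonempty)
    (xs : Euc n) (hxs : xs ∈ X)
    (fstar : ℝ) (hstar : (f xs : EReal) + g xs = (fstar : ℝ))
    (κ ω : ℝ) (hκ : 0 < κ) (hω : 0 < ω)
    (heGEB : ∀ y, (f y : EReal) + g y ≤ ((fstar + ω : ℝ) : EReal) →
      ‖γ • (y - p y)‖ ≥ κ * Metric.infDist y X) :
    ∀ y, (f y : EReal) + g y ≤ ((fstar + ω : ℝ) : EReal) →
      ∀ q ∈ X, dist y q = Metric.infDist y X →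
        ⟪γ • (y - p y), y - q⟫ ≥ κ ^ 2 / (2 * γ) * (Metric.infDist y X) ^ 2 :=
  stmt_4_general L γ hL hγ f f' g hconv hgrad hLip hgbot hgconv p hp X hX xs fstar hstar κ ω hκ
    heGEB
end

section
/- Under the extended quadratic growth property eQG(τ, ω) for φ = f + g (f convex with L-Lipschitz gradient, g closed convex), the proximal gradient iterates x_{k+1} = x_k − (1/γ)G(x_k) with γ ≥ L satisfy, for all k beyond some index m, the Q-linear decrease of distances: d(x_{k+1}, 𝒳) ≤ √(γ/(γ+τ))·d(x_k, 𝒳). -/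
open RealInnerProductSpace Metric Set Filter

/-!
The prox step `q = p y` minimizes the `γ`-strongly convex model
`z ↦ f y + ⟪∇f y, z - y⟫ + γ/2 ‖z - y‖² + g z`, so the model exceeds its minimum by at least
`γ/2 ‖z - q‖²`. Since the model majorizes `φ = f + g` (descent lemma, `L ≤ γ`) and minorizes
`φ + γ/2 ‖· - y‖²` (convexity of `f`), this gives the three-point inequality
`φ q + γ/2 ‖u - q‖² ≤ φ u + γ/2 ‖u - y‖²` for every `u` in the domain of `g`.

With `u = y` the values `φ (x k)` decrease, and with `u` a minimizer the inequality telescopes to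
`φ (x k) - φ* ≤ γ ‖x₀ - x*‖² / (2k)`; hence eventually the iterates lie in the region where
quadratic growth holds. There, choosing `u ∈ 𝒳` and using `d(x_{k+1}, 𝒳) ≤ ‖u - x_{k+1}‖` gives
`(γ + τ) d(x_{k+1}, 𝒳)² ≤ γ ‖u - x_k‖²`, and taking the infimum over `u` yields the contraction.
-/

theorem EReal.ne_top_of_coe_add_le_coe {a c : ℝ} {x : EReal} (h : (a : EReal) + x ≤ c) :
    x ≠ ⊤ := by
  rintro rfl
  rw [EReal.coe_add_top] at h
  exact EReal.coe_ne_top c (top_le_iff.1 h)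

section InnerProductSpace

variable {E : Type*} [NormedAddCommGroup E] [InnerProductSpace ℝ E]

theorem strongConvexOn_add_inner_add_sq (a γ : ℝ) (w c : E) :
    StrongConvexOn univ γ (fun z => a + ⟪w, z - c⟫ + γ / 2 * ‖z - c‖ ^ 2) := by
  rw [strongConvexOn_iff_convex]
  have hshape : (fun z => a + ⟪w, z - c⟫ + γ / 2 * ‖z - c‖ ^ 2 - γ / 2 * ‖z‖ ^ 2)
      = fun z => ⟪w - γ • c, z⟫ + (a - ⟪w, c⟫ + γ / 2 * ‖c‖ ^ 2) := by
    ext z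
    rw [norm_sub_sq_real, inner_sub_left, inner_sub_right, real_inner_smul_left,
      real_inner_comm c z]
    ring
  rw [hshape]
  exact ((innerSL ℝ (w - γ • c)).toLinearMap.convexOn convex_univ).add_const _

theorem StrongConvexOn.add_sq_le_of_forall_le_add {Q : E → ℝ} {h : E → EReal} {γ : ℝ}
    (hQ : StrongConvexOn univ γ Q) (hbot : ∀ x, h x ≠ ⊥)
    (hconv : ∀ x y : E, ∀ a b : ℝ, 0 ≤ a → 0 ≤ b → a + b = 1 →
      h (a • x + b • y) ≤ (a : EReal) * h x + (b : EReal) * h y)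
    {q : E} (hq : ∀ z, (Q q : EReal) + h q ≤ (Q z : EReal) + h z) {u : E} (hu : h u ≠ ⊤) :
    h q ≠ ⊤ ∧ Q q + (h q).toReal + γ / 2 * ‖u - q‖ ^ 2 ≤ Q u + (h u).toReal := by
  set b := (h u).toReal
  have hb : h u = b := (EReal.coe_toReal hu (hbot u)).symm
  have hqtop : h q ≠ ⊤ := by
    have := hq u
    rw [hb, ← EReal.coe_add] at this
    exact EReal.ne_top_of_coe_add_le_coe this
  set r := (h q).toReal
  have hr : h q = r := (EReal.coe_toReal hqtop (hbot q)).symm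
  refine ⟨hqtop, ?_⟩
  -- test minimality against `(1 - t) • q + t • u`, divide by `t` and let `t → 0`
  have hsegment : ∀ t ∈ Ioo (0 : ℝ) 1,
      Q q + r + γ / 2 * ‖u - q‖ ^ 2 * (1 - t) ≤ Q u + b := by
    rintro t ⟨ht0, ht1⟩
    set z := (1 - t) • q + t • u
    have hhz : h z ≤ (((1 - t) * r + t * b : ℝ) : EReal) := by
      have := hconv q u (1 - t) t (by linarith) ht0.le (by ring)
      rwa [hr, hb, ← EReal.coe_mul, ← EReal.coe_mul, ← EReal.coe_add] at this
    have hmin : Q q + r ≤ Q z + ((1 - t) * r + t * b) := by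
      have := (hq z).trans (add_le_add_right hhz _)
      rwa [hr, ← EReal.coe_add, ← EReal.coe_add, EReal.coe_le_coe_iff] at this
    have hstrong := hQ.2 (mem_univ q) (mem_univ u) (by linarith) ht0.le (sub_add_cancel 1 t)
    simp only [smul_eq_mul, norm_sub_rev q u] at hstrong
    have : t * (Q q + r + γ / 2 * ‖u - q‖ ^ 2 * (1 - t)) ≤ t * (Q u + b) := by
      nlinarith
    exact le_of_mul_le_mul_left this ht0
  have hclosed : IsClosed {t : ℝ | Q q + r + γ / 2 * ‖u - q‖ ^ 2 * (1 - t) ≤ Q u + b} :=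
    isClosed_le (by fun_prop) continuous_const
  have := hclosed.closure_subset_iff.2 hsegment
    (by rw [closure_Ioo zero_ne_one]; exact left_mem_Icc.2 zero_le_one)
  simpa using this

variable [CompleteSpace E] {f : E → ℝ} {f' : E → E}

theorem HasGradientAt.hasDerivAt_comp_add_smul {a v g : E} {t : ℝ}
    (hf : HasGradientAt f g (a + t • v)) :
    HasDerivAt (fun s : ℝ => f (a + s • v)) ⟪g, v⟫ t := by
  have hline : HasDerivAt (fun s : ℝ => a + s • v) v t := by
    simpa using ((hasDerivAt_id t).smul_const v).const_add a
  have := hf.hasFDerivAt.comp_hasDerivAt t hline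
  simp only [InnerProductSpace.toDual_apply_apply] at this
  exact this

theorem ConvexOn.add_inner_le_of_hasGradientAt (hconv : ConvexOn ℝ univ f) {a g : E}
    (hf : HasGradientAt f g a) (u : E) : f a + ⟪g, u - a⟫ ≤ f u := by
  have hline : ConvexOn ℝ univ (fun t : ℝ => f (a + t • (u - a))) := by
    simpa [Function.comp_def, AffineMap.lineMap_apply_module', add_comm] using
      hconv.comp_affineMap (AffineMap.lineMap a u)
  have hderiv : HasDerivAt (fun t : ℝ => f (a + t • (u - a))) ⟪g, u - a⟫ 0 :=
    HasGradientAt.hasDerivAt_comp_add_smul (by simpa using hf)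
  have := hline.le_slope_of_hasDerivAt (mem_univ 0) (mem_univ 1) zero_lt_one hderiv
  simp only [slope_def_field, one_smul, add_sub_cancel, zero_smul, add_zero, sub_zero, div_one]
    at this
  linarith

theorem le_add_inner_add_sq_of_lipschitz_gradient {L : ℝ}
    (hgrad : ∀ x, HasGradientAt f (f' x) x) (hLip : ∀ x y, ‖f' x - f' y‖ ≤ L * ‖x - y‖)
    (a y : E) : f y ≤ f a + ⟪f' a, y - a⟫ + L / 2 * ‖y - a‖ ^ 2 := by
  set v := y - a
  have hderiv (t : ℝ) : HasDerivAt (fun s : ℝ => f (a + s • v)) ⟪f' (a + t • v), v⟫ t :=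
    (hgrad _).hasDerivAt_comp_add_smul
  have hbound (t : ℝ) : HasDerivAt (fun s : ℝ => f a + s * ⟪f' a, v⟫ + L / 2 * s ^ 2 * ‖v‖ ^ 2)
      (⟪f' a, v⟫ + L * t * ‖v‖ ^ 2) t := by
    refine ((((hasDerivAt_id t).mul_const ⟪f' a, v⟫).const_add (f a)).add
      (((hasDerivAt_pow 2 t).const_mul (L / 2)).mul_const (‖v‖ ^ 2))).congr_deriv ?_
    push_cast
    ring
  have hslope : ∀ t ∈ Ico (0 : ℝ) 1, ⟪f' (a + t • v), v⟫ ≤ ⟪f' a, v⟫ + L * t * ‖v‖ ^ 2 := by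
    rintro t ⟨ht, -⟩
    have hLipt : ‖f' (a + t • v) - f' a‖ ≤ L * (t * ‖v‖) := by
      simpa [norm_smul, abs_of_nonneg ht] using hLip (a + t • v) a
    calc ⟪f' (a + t • v), v⟫ = ⟪f' a, v⟫ + ⟪f' (a + t • v) - f' a, v⟫ := by
          rw [inner_sub_left]; ring
      _ ≤ ⟪f' a, v⟫ + ‖f' (a + t • v) - f' a‖ * ‖v‖ := by gcongr; exact real_inner_le_norm _ _
      _ ≤ ⟪f' a, v⟫ + L * t * ‖v‖ ^ 2 := by nlinarith [norm_nonneg v]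
  have := image_le_of_deriv_right_le_deriv_boundary
    (fun t _ => (hderiv t).continuousAt.continuousWithinAt) (fun t _ => (hderiv t).hasDerivWithinAt)
    (by simp) (fun t _ => (hbound t).continuousAt.continuousWithinAt)
    (fun t _ => (hbound t).hasDerivWithinAt) hslope (right_mem_Icc.2 zero_le_one)
  simpa [v] using this

theorem proxGrad_three_point {g : E → EReal} {L γ : ℝ} (hconv : ConvexOn ℝ univ f)
    (hgrad : ∀ x, HasGradientAt f (f' x) x) (hLip : ∀ x y, ‖f' x - f' y‖ ≤ L * ‖x - y‖)
    (hLγ : L ≤ γ) (hgbot : ∀ x, g x ≠ ⊥)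
    (hgconv : ∀ x y : E, ∀ a b : ℝ, 0 ≤ a → 0 ≤ b → a + b = 1 →
      g (a • x + b • y) ≤ (a : EReal) * g x + (b : EReal) * g y)
    {y q : E} (hq : ∀ z, ((f y + ⟪f' y, q - y⟫ + γ / 2 * ‖q - y‖ ^ 2 : ℝ) : EReal) + g q
      ≤ ((f y + ⟪f' y, z - y⟫ + γ / 2 * ‖z - y‖ ^ 2 : ℝ) : EReal) + g z)
    {u : E} (hu : g u ≠ ⊤) :
    g q ≠ ⊤ ∧ f q + (g q).toReal + γ / 2 * ‖u - q‖ ^ 2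
      ≤ f u + (g u).toReal + γ / 2 * ‖u - y‖ ^ 2 := by
  obtain ⟨hq, hmodel⟩ := (strongConvexOn_add_inner_add_sq (f y) γ (f' y) y).add_sq_le_of_forall_le_add
    hgbot hgconv hq hu
  refine ⟨hq, ?_⟩
  have hdescent := le_add_inner_add_sq_of_lipschitz_gradient hgrad hLip y q
  have hgradient := hconv.add_inner_le_of_hasGradientAt (hgrad y) u
  have : L / 2 * ‖q - y‖ ^ 2 ≤ γ / 2 * ‖q - y‖ ^ 2 := by gcongr
  linarith

end InnerProductSpace

theorem succ_mul_le_of_antitone_of_le_sub {a d : ℕ → ℝ} (ha : Antitone a) (hd : ∀ k, 0 ≤ d k)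
    (h : ∀ k, a k ≤ d k - d (k + 1)) (k : ℕ) : (k + 1) * a k ≤ d 0 := by
  calc ((k : ℝ) + 1) * a k = ∑ _j ∈ Finset.range (k + 1), a k := by simp
    _ ≤ ∑ j ∈ Finset.range (k + 1), a j :=
        Finset.sum_le_sum fun j hj => ha (Nat.lt_succ_iff.1 (Finset.mem_range.1 hj))
    _ ≤ ∑ j ∈ Finset.range (k + 1), (d j - d (j + 1)) := Finset.sum_le_sum fun j _ => h j
    _ = d 0 - d (k + 1) := Finset.sum_range_sub' d (k + 1)
    _ ≤ d 0 := sub_le_self _ (hd _)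

theorem exists_forall_ge_le_of_succ_mul_le {a : ℕ → ℝ} {C ω : ℝ} (hω : 0 < ω)
    (h : ∀ k : ℕ, (k + 1) * a k ≤ C) : ∃ m, ∀ k ≥ m, a k ≤ ω := by
  obtain ⟨m, hm⟩ := exists_nat_gt (C / ω)
  refine ⟨m, fun k hk => ?_⟩
  have hk : C < (k + 1) * ω := by
    rw [div_lt_iff₀ hω] at hm
    have : (m : ℝ) ≤ k := by exact_mod_cast hk
    nlinarith
  exact le_of_mul_le_mul_left ((h k).trans hk.le) (by positivity)

section NormedAddCommGroup

variable {E : Type*} [NormedAddCommGroup E]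

theorem succ_mul_sub_le_of_three_point {φ : E → ℝ} {D : Set E} {x : ℕ → E} {γ : ℝ}
    (hγ : 0 ≤ γ) (hD : ∀ k, x (k + 1) ∈ D)
    (h : ∀ k, ∀ u ∈ D, φ (x (k + 1)) + γ / 2 * ‖u - x (k + 1)‖ ^ 2
      ≤ φ u + γ / 2 * ‖u - x k‖ ^ 2)
    {u : E} (hu : u ∈ D) (k : ℕ) :
    (k + 1) * (φ (x (k + 1)) - φ u) ≤ γ / 2 * ‖u - x 0‖ ^ 2 := by
  refine succ_mul_le_of_antitone_of_le_sub (a := fun k => φ (x (k + 1)) - φ u)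
    (d := fun k => γ / 2 * ‖u - x k‖ ^ 2) ?_
    (fun k => by positivity) (fun k => by linarith [h k u hu]) k
  refine antitone_nat_of_succ_le fun k => ?_
  have := h (k + 1) (x (k + 1)) (hD k)
  simp only [sub_self, norm_zero] at this
  nlinarith [sq_nonneg ‖x (k + 1) - x (k + 1 + 1)‖]

theorem le_sqrt_mul_infDist {α : Type*} [PseudoMetricSpace α] {X : Set α} (hX : X.Nonempty)
    {y : α} {r c : ℝ} (hr : 0 ≤ r) (hc : 0 < c) (h : ∀ u ∈ X, r ^ 2 ≤ c * dist y u ^ 2) :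
    r ≤ √c * infDist y X := by
  have hsqrt : 0 < √c := Real.sqrt_pos.2 hc
  rw [← div_le_iff₀' hsqrt]
  refine (le_infDist hX).2 fun u hu => ?_
  rw [div_le_iff₀' hsqrt, ← Real.sqrt_sq hr, ← Real.sqrt_sq dist_nonneg, ← Real.sqrt_mul hc.le]
  exact Real.sqrt_le_sqrt (h u hu)

theorem infDist_le_sqrt_mul_infDist_of_quadraticGrowth {φ : E → ℝ} {X : Set E}
    (hX : X.Nonempty) {γ τ φstar : ℝ} (hγ : 0 < γ) (hγτ : 0 < γ + τ) {y y' : E}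
    (hgrowth : φstar + τ / 2 * infDist y' X ^ 2 ≤ φ y')
    (hstep : ∀ u ∈ X, φ y' + γ / 2 * ‖u - y'‖ ^ 2 ≤ φstar + γ / 2 * ‖u - y‖ ^ 2) :
    infDist y' X ≤ √(γ / (γ + τ)) * infDist y X := by
  refine le_sqrt_mul_infDist hX infDist_nonneg (by positivity) fun u hu => ?_
  have hdist : infDist y' X ≤ ‖u - y'‖ := by
    rw [norm_sub_rev, ← dist_eq_norm]
    exact infDist_le_dist_of_mem hu
  have hsq : infDist y' X ^ 2 ≤ ‖u - y'‖ ^ 2 := by gcongr; exact infDist_nonneg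
  rw [dist_eq_norm, norm_sub_rev, div_mul_eq_mul_div, le_div_iff₀ hγτ]
  nlinarith [hstep u hu]

end NormedAddCommGroup

theorem stmt_6_general {n : ℕ} (L γ : ℝ) (hL : 0 < L) (hγ : γ ≥ L)
    (f : Euc n → ℝ) (f' : Euc n → Euc n) (g : Euc n → EReal)
    (hconv : ConvexOn ℝ Set.univ f)
    (hgrad : ∀ x, HasGradientAt f (f' x) x)
    (hLip : ∀ x y, ‖f' x - f' y‖ ≤ L * ‖x - y‖)
    (hgbot : ∀ x, g x ≠ ⊥) (hgtop : ∃ x, g x ≠ ⊤)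
    (hgconv : ∀ x y : Euc n, ∀ a b : ℝ, 0 ≤ a → 0 ≤ b → a + b = 1 →
      g (a • x + b • y) ≤ (a : EReal) * g x + (b : EReal) * g y)
    (p : Euc n → Euc n)
    (hp : ∀ xb x, ((f xb + ⟪f' xb, p xb - xb⟫ + γ / 2 * ‖p xb - xb‖ ^ 2 : ℝ) : EReal) + g (p xb)
        ≤ ((f xb + ⟪f' xb, x - xb⟫ + γ / 2 * ‖x - xb‖ ^ 2 : ℝ) : EReal) + g x)
    (X : Set (Euc n))
    (hX : X = {x | ∀ y, (f x : EReal) + g x ≤ (f y : EReal) + g y})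
    (xs : Euc n) (hxs : xs ∈ X)
    (fstar : ℝ) (hstar : (f xs : EReal) + g xs = (fstar : ℝ))
    (τ ω : ℝ) (hτ : 0 < τ) (hω : 0 < ω)
    (heQG : ∀ y, (f y : EReal) + g y ≤ ((fstar + ω : ℝ) : EReal) →
      ((fstar + τ / 2 * (Metric.infDist y X) ^ 2 : ℝ) : EReal) ≤ (f y : EReal) + g y)
    (x : ℕ → Euc n)
    (hiter : ∀ k, x (k + 1) = x k - (1 / γ) • (γ • (x k - p (x k)))) :
    ∃ m : ℕ, ∀ k ≥ m,
      Metric.infDist (x (k + 1)) X ≤ Real.sqrt (γ / (γ + τ)) * Metric.infDist (x k) X := by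
  have hγ0 : 0 < γ := hL.trans_le hγ
  have hstep (k : ℕ) : x (k + 1) = p (x k) := by
    rw [hiter k, smul_smul, one_div, inv_mul_cancel₀ hγ0.ne', one_smul, sub_sub_cancel]
  set φ : Euc n → ℝ := fun z => f z + (g z).toReal
  set D := {z | g z ≠ ⊤}
  have hprox (k : ℕ) (u : Euc n) (hu : u ∈ D) : x (k + 1) ∈ D ∧
      φ (x (k + 1)) + γ / 2 * ‖u - x (k + 1)‖ ^ 2 ≤ φ u + γ / 2 * ‖u - x k‖ ^ 2 := by
    rw [hstep k]
    exact proxGrad_three_point hconv hgrad hLip hγ hgbot hgconv (hp (x k)) hu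
  obtain ⟨x₀, hx₀⟩ := hgtop
  have hD (k : ℕ) : x (k + 1) ∈ D := (hprox k x₀ hx₀).1
  have hcoe (z : Euc n) (hz : z ∈ D) : (f z : EReal) + g z = (φ z : ℝ) := by
    rw [EReal.coe_add, EReal.coe_toReal hz (hgbot z)]
  have hmin (u : Euc n) (hu : u ∈ X) : u ∈ D ∧ φ u = fstar := by
    rw [hX] at hxs hu
    have hval : (f u : EReal) + g u = fstar := hstar ▸ le_antisymm (hu xs) (hxs u)
    have huD : u ∈ D := EReal.ne_top_of_coe_add_le_coe hval.le
    exact ⟨huD, by rwa [hcoe u huD, EReal.coe_eq_coe_iff] at hval⟩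
  obtain ⟨m, hm⟩ := exists_forall_ge_le_of_succ_mul_le hω
    (succ_mul_sub_le_of_three_point hγ0.le hD (fun k u hu => (hprox k u hu).2) (hmin xs hxs).1)
  refine ⟨m, fun k hk => infDist_le_sqrt_mul_infDist_of_quadraticGrowth (φ := φ) ⟨xs, hxs⟩ hγ0
    (by linarith) ?_ fun u hu => (hmin u hu).2 ▸ (hprox k u (hmin u hu).1).2⟩
  have hsmall : φ (x (k + 1)) ≤ fstar + ω := by linarith [hm k hk, (hmin xs hxs).2]
  have := heQG (x (k + 1)) (by rw [hcoe _ (hD k)]; exact_mod_cast hsmall)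
  rwa [hcoe _ (hD k), EReal.coe_le_coe_iff] at this

theorem stmt_6 {n : ℕ} (L γ : ℝ) (hL : 0 < L) (hγ : γ ≥ L)
    (f : Euc n → ℝ) (f' : Euc n → Euc n) (g : Euc n → EReal)
    (hconv : ConvexOn ℝ Set.univ f)
    (hgrad : ∀ x, HasGradientAt f (f' x) x)
    (hLip : ∀ x y, ‖f' x - f' y‖ ≤ L * ‖x - y‖)
    (hgbot : ∀ x, g x ≠ ⊥) (hgtop : ∃ x, g x ≠ ⊤)
    (hglsc : LowerSemicontinuous g)
    (hgconv : ∀ x y : Euc n, ∀ a b : ℝ, 0 ≤ a → 0 ≤ b → a + b = 1 →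
      g (a • x + b • y) ≤ (a : EReal) * g x + (b : EReal) * g y)
    (p : Euc n → Euc n)
    (hp : ∀ xb x, ((f xb + ⟪f' xb, p xb - xb⟫ + γ / 2 * ‖p xb - xb‖ ^ 2 : ℝ) : EReal) + g (p xb)
        ≤ ((f xb + ⟪f' xb, x - xb⟫ + γ / 2 * ‖x - xb‖ ^ 2 : ℝ) : EReal) + g x)
    (X : Set (Euc n))
    (hX : X = {x | ∀ y, (f x : EReal) + g x ≤ (f y : EReal) + g y})
    (hne : X.Nonempty)
    (xs : Euc n) (hxs : xs ∈ X)
    (fstar : ℝ) (hstar : (f xs : EReal) + g xs = (fstar : ℝ))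
    (τ ω : ℝ) (hτ : 0 < τ) (hω : 0 < ω)
    (heQG : ∀ y, (f y : EReal) + g y ≤ ((fstar + ω : ℝ) : EReal) →
      ((fstar + τ / 2 * (Metric.infDist y X) ^ 2 : ℝ) : EReal) ≤ (f y : EReal) + g y)
    (x : ℕ → Euc n)
    (hiter : ∀ k, x (k + 1) = x k - (1 / γ) • (γ • (x k - p (x k)))) :
    ∃ m : ℕ, ∀ k ≥ m,
      Metric.infDist (x (k + 1)) X ≤ Real.sqrt (γ / (γ + τ)) * Metric.infDist (x k) X :=
  stmt_6_general L γ hL hγ f f' g hconv hgrad hLip hgbot hgtop hgconv p hp X hX xs hxs fstar hstar τ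
    ω hτ hω heQG x hiter
end

section
/- Let f(x) = g(Ex) with g μ-strongly convex differentiable with L-Lipschitz gradient, Q a closed convex set, and γ ≥ L‖EEᵀ‖. Then for any x̄ and all x ∈ Q: f(x) ≥ f(x_Q(x̄;γ)) + ⟨G(x̄), x − x̄⟩ + (1/(2γ))‖G(x̄)‖² + (μ/2)‖Ex − Ex̄‖², where x_Q(x̄;γ) = argmin_{x∈Q}[f(x̄) + ⟨∇f(x̄), x − x̄⟩ + (γ/2)‖x − x̄‖²] and G(x̄) = γ(x̄ − x_Q(x̄;γ)). -/
/-! Strong monotonicity of `∇g` gives the quadratic lower bound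
`g (E x) ≥ g (E x̄) + ⟪∇f x̄, x - x̄⟫ + μ/2 ‖E x - E x̄‖²`, and Lipschitz continuity of `∇g`
gives the descent bound `g (E x_Q) ≤ g (E x̄) + ⟪∇f x̄, x_Q - x̄⟫ + γ/2 ‖x_Q - x̄‖²`, because
`L ‖E y‖² ≤ L ‖E Eᵀ‖ ‖y‖² ≤ γ ‖y‖²`. Both bounds come from comparing `t ↦ g (v + t w)` with a
parabola on `[0, 1]`. Subtracting them and using the first-order optimality condition
`⟪∇f x̄ - G x̄, x - x_Q⟫ ≥ 0` of the prox step leaves exactly the claimed inequality. -/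

open RealInnerProductSpace Metric Set Filter

theorem le_image_one_of_mul_le_deriv_sub {φ φ' : ℝ → ℝ} {c : ℝ}
    (hφ : ∀ t, HasDerivAt φ (φ' t) t) (hφ' : ∀ t ∈ Ioo (0 : ℝ) 1, c * t ≤ φ' t - φ' 0) :
    φ 0 + φ' 0 + c / 2 ≤ φ 1 := by
  let ψ : ℝ → ℝ := fun t => φ t - t * φ' 0 - c / 2 * t ^ 2
  have hψ : ∀ t, HasDerivAt ψ (φ' t - φ' 0 - c * t) t := fun t =>
    (((hφ t).sub ((hasDerivAt_id' t).mul_const (φ' 0))).sub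
      ((hasDerivAt_pow 2 t).const_mul (c / 2))).congr_deriv (by ring)
  have hmono : MonotoneOn ψ (Icc 0 1) := by
    refine monotoneOn_of_deriv_nonneg (convex_Icc 0 1)
      (fun t _ => (hψ t).continuousAt.continuousWithinAt)
      (fun t _ => (hψ t).differentiableAt.differentiableWithinAt) fun t ht => ?_
    rw [interior_Icc] at ht
    rw [(hψ t).deriv]
    linarith [hφ' t ht]
  have := hmono (left_mem_Icc.2 zero_le_one) (right_mem_Icc.2 zero_le_one) zero_le_one
  simp only [ψ] at this
  linarith

section Gradient

variable {E : Type*} [NormedAddCommGroup E] [InnerProductSpace ℝ E] [CompleteSpace E]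

theorem HasGradientAt.hasDerivAt_add_smul_s10 {g : E → ℝ} {g' v w : E} {t : ℝ}
    (hg : HasGradientAt g g' (v + t • w)) :
    HasDerivAt (fun s : ℝ => g (v + s • w)) ⟪g', w⟫ t := by
  have hline : HasDerivAt (fun s : ℝ => v + s • w) w t := by
    simpa using ((hasDerivAt_id t).smul_const w).const_add v
  simpa [InnerProductSpace.toDual_apply_apply, Function.comp_def] using
    hg.hasFDerivAt.comp_hasDerivAt t hline

variable {g : E → ℝ} {g' : E → E}

theorem first_order_lower_bound_of_strongly_monotone_gradient {μ : ℝ}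
    (hg : ∀ u, HasGradientAt g (g' u) u)
    (hstrong : ∀ u v, μ * ‖u - v‖ ^ 2 ≤ ⟪g' u - g' v, u - v⟫) (u v : E) :
    g v + ⟪g' v, u - v⟫ + μ / 2 * ‖u - v‖ ^ 2 ≤ g u := by
  have key := le_image_one_of_mul_le_deriv_sub (c := μ * ‖u - v‖ ^ 2)
    (fun t => (hg (v + t • (u - v))).hasDerivAt_add_smul_s10) fun t ht => by
      have h := hstrong (v + t • (u - v)) v
      rw [add_sub_cancel_left, norm_smul, Real.norm_eq_abs, abs_of_pos ht.1, mul_pow,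
        inner_smul_right] at h
      rw [zero_smul, add_zero, ← inner_sub_left]
      exact le_of_mul_le_mul_left (by linarith) ht.1
  simp only [zero_smul, add_zero, one_smul, add_sub_cancel] at key
  linarith

theorem first_order_upper_bound_of_lipschitz_gradient {L : ℝ}
    (hg : ∀ u, HasGradientAt g (g' u) u)
    (hLip : ∀ u v, ‖g' u - g' v‖ ≤ L * ‖u - v‖) (u v : E) :
    g u ≤ g v + ⟪g' v, u - v⟫ + L / 2 * ‖u - v‖ ^ 2 := by
  have key := le_image_one_of_mul_le_deriv_sub (φ := fun s => -g (v + s • (u - v)))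
    (c := -(L * ‖u - v‖ ^ 2))
    (fun t => (hg (v + t • (u - v))).hasDerivAt_add_smul_s10.neg) fun t ht => by
      have hcs := real_inner_le_norm (g' (v + t • (u - v)) - g' v) (u - v)
      have h := hLip (v + t • (u - v)) v
      rw [add_sub_cancel_left, norm_smul, Real.norm_eq_abs, abs_of_pos ht.1] at h
      rw [inner_sub_left] at hcs
      rw [zero_smul, add_zero]
      nlinarith [mul_le_mul_of_nonneg_right h (norm_nonneg (u - v))]
  simp only [zero_smul, add_zero, one_smul, add_sub_cancel] at key
  linarith

end Gradient

theorem ContinuousLinearMap.norm_apply_sq_le_norm_comp_adjoint_mul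
    {E F : Type*} [NormedAddCommGroup E] [InnerProductSpace ℝ E] [CompleteSpace E]
    [NormedAddCommGroup F] [InnerProductSpace ℝ F] [CompleteSpace F]
    (A : E →L[ℝ] F) (x : E) : ‖A x‖ ^ 2 ≤ ‖A.comp (adjoint A)‖ * ‖x‖ ^ 2 := by
  have hcomp : ‖A.comp (adjoint A)‖ = ‖A‖ ^ 2 := by
    simpa [sq] using (adjoint A).norm_adjoint_comp_self
  rw [hcomp, ← mul_pow]
  gcongr
  exact A.le_opNorm x

theorem inner_add_smul_sub_nonneg_of_isMinOn {E : Type*} [NormedAddCommGroup E]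
    [InnerProductSpace ℝ E] {a b p : E} {γ : ℝ} {Q : Set E} (hQ : Convex ℝ Q) (hp : p ∈ Q)
    (hmin : IsMinOn (fun x => ⟪a, x - b⟫ + γ / 2 * ‖x - b‖ ^ 2) Q p) {x : E} (hx : x ∈ Q) :
    0 ≤ ⟪a + γ • (p - b), x - p⟫ := by
  have hderiv : HasFDerivAt (fun x => ⟪a, x - b⟫ + γ / 2 * ‖x - b‖ ^ 2)
      (innerSL ℝ (a + γ • (p - b))) p := by
    have hsub := (hasFDerivAt_id (𝕜 := ℝ) p).sub_const b
    refine (((innerSL ℝ a).hasFDerivAt.comp p hsub).add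
      (hsub.norm_sq.const_mul (γ / 2))).congr_fderiv ?_
    ext y
    simp only [ContinuousLinearMap.comp_id, id_eq, map_sub, add_apply,
      coe_innerSL_apply, smul_apply, nsmul_eq_mul, Nat.cast_ofNat,
      smul_eq_mul, map_add, map_smul, add_right_inj]
    ring
  exact hmin.localize.hasFDerivWithinAt_nonneg hderiv.hasFDerivWithinAt
    (sub_mem_posTangentConeAt_of_segment_subset (hQ.segment_subset hp hx))

theorem one_div_two_mul_mul_norm_smul_sq {E : Type*} [NormedAddCommGroup E] [NormedSpace ℝ E]
    (γ : ℝ) (v : E) : 1 / (2 * γ) * ‖γ • v‖ ^ 2 = γ / 2 * ‖v‖ ^ 2 := by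
  rw [norm_smul, mul_pow, Real.norm_eq_abs, sq_abs]
  rcases eq_or_ne γ 0 with rfl | _
  · simp
  · field_simp

theorem stmt_10_general {n m : ℕ} (μ L γ : ℝ) (hL : 0 < L)
    (g : Euc m → ℝ) (g' : Euc m → Euc m)
    (hgrad : ∀ u, HasGradientAt g (g' u) u)
    (hSC : ∀ u v, ⟪g' u - g' v, u - v⟫ ≥ μ * ‖u - v‖ ^ 2)
    (hLip : ∀ u v, ‖g' u - g' v‖ ≤ L * ‖u - v‖)
    (A : Euc n →L[ℝ] Euc m)
    (hγ : γ ≥ L * ‖A.comp (ContinuousLinearMap.adjoint A)‖)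
    (Q : Set (Euc n)) (hQconv : Convex ℝ Q)
    (xQ : Euc n → Euc n)
    (hxQ : ∀ xb, xQ xb ∈ Q ∧ ∀ x ∈ Q,
      g (A xb) + ⟪ContinuousLinearMap.adjoint A (g' (A xb)), xQ xb - xb⟫ + γ / 2 * ‖xQ xb - xb‖ ^ 2
        ≤ g (A xb) + ⟪ContinuousLinearMap.adjoint A (g' (A xb)), x - xb⟫ + γ / 2 * ‖x - xb‖ ^ 2) :
    ∀ xb, ∀ x ∈ Q,
      g (A x) ≥ g (A (xQ xb)) + ⟪γ • (xb - xQ xb), x - xb⟫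
        + 1 / (2 * γ) * ‖γ • (xb - xQ xb)‖ ^ 2 + μ / 2 * ‖A x - A xb‖ ^ 2 := by
  intro xb x hx
  set p := xQ xb
  set a := ContinuousLinearMap.adjoint A (g' (A xb))
  have hadj (y : Euc n) : ⟪g' (A xb), A y - A xb⟫ = ⟪a, y - xb⟫ := by
    rw [← map_sub, ContinuousLinearMap.adjoint_inner_left]
  have hlower := first_order_lower_bound_of_strongly_monotone_gradient hgrad hSC (A x) (A xb)
  have hupper := first_order_upper_bound_of_lipschitz_gradient hgrad hLip (A p) (A xb)
  rw [hadj] at hlower hupper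
  have hA : L * ‖A p - A xb‖ ^ 2 ≤ γ * ‖p - xb‖ ^ 2 := calc
    L * ‖A p - A xb‖ ^ 2 ≤ L * (‖A.comp (ContinuousLinearMap.adjoint A)‖ * ‖p - xb‖ ^ 2) := by
      rw [← map_sub]; gcongr; exact A.norm_apply_sq_le_norm_comp_adjoint_mul _
    _ ≤ γ * ‖p - xb‖ ^ 2 := by rw [← mul_assoc]; gcongr
  have hopt := inner_add_smul_sub_nonneg_of_isMinOn (a := a) (b := xb) (γ := γ) hQconv
    (hxQ xb).1 (isMinOn_iff.2 fun y hy => by linarith [(hxQ xb).2 y hy]) hx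
  have hsplit : x - xb = (x - p) - (xb - p) := by abel
  rw [one_div_two_mul_mul_norm_smul_sq, hsplit, inner_sub_right, real_inner_smul_left, real_inner_smul_left,
    real_inner_self_eq_norm_sq, norm_sub_rev xb p]
  rw [inner_add_left, real_inner_smul_left, ← neg_sub xb p, inner_neg_left] at hopt
  have : ⟪a, x - xb⟫ = ⟪a, x - p⟫ + ⟪a, p - xb⟫ := by
    rw [← inner_add_right, sub_add_sub_cancel]
  linarith

theorem stmt_10 {n m : ℕ} (μ L γ : ℝ) (hμ : 0 < μ) (hL : 0 < L)
    (g : Euc m → ℝ) (g' : Euc m → Euc m)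
    (hgrad : ∀ u, HasGradientAt g (g' u) u)
    (hSC : ∀ u v, ⟪g' u - g' v, u - v⟫ ≥ μ * ‖u - v‖ ^ 2)
    (hLip : ∀ u v, ‖g' u - g' v‖ ≤ L * ‖u - v‖)
    (A : Euc n →L[ℝ] Euc m)
    (hγ : γ ≥ L * ‖A.comp (ContinuousLinearMap.adjoint A)‖)
    (Q : Set (Euc n)) (hQc : IsClosed Q) (hQconv : Convex ℝ Q) (hQne : Q.Nonempty)
    (xQ : Euc n → Euc n)
    (hxQ : ∀ xb, xQ xb ∈ Q ∧ ∀ x ∈ Q,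
      g (A xb) + ⟪ContinuousLinearMap.adjoint A (g' (A xb)), xQ xb - xb⟫ + γ / 2 * ‖xQ xb - xb‖ ^ 2
        ≤ g (A xb) + ⟪ContinuousLinearMap.adjoint A (g' (A xb)), x - xb⟫ + γ / 2 * ‖x - xb‖ ^ 2) :
    ∀ xb, ∀ x ∈ Q,
      g (A x) ≥ g (A (xQ xb)) + ⟪γ • (xb - xQ xb), x - xb⟫
        + 1 / (2 * γ) * ‖γ • (xb - xQ xb)‖ ^ 2 + μ / 2 * ‖A x - A xb‖ ^ 2 :=
  stmt_10_general μ L γ hL g g' hgrad hSC hLip A hγ Q hQconv xQ hxQ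
end

section
/- Let f(x) = g(Ex) with g strongly convex and differentiable, Q = {x : Ax ≤ b} a polyhedral set, and 𝒳 = argmin_{x∈Q} f(x) nonempty. Then there exists a unique vector t* ∈ ℝᵐ such that Ex = t* for every x ∈ 𝒳; consequently 𝒳 = {x : Ex = t*} ∩ {x : Ax ≤ b}. -/
open RealInnerProductSpace Metric Set Filter

/-!
A strongly monotone gradient makes `g` strictly convex (restrict `g` to a line: the derivative
of the restriction is strictly increasing). The polyhedron `Q` is convex, so `A '' Q` is convex
and `A x` minimises `g` on `A '' Q` for every `x ∈ X`; a strictly convex function has at most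
one minimiser on a convex set, so `A` is constant on `X`.
-/

section Gradient

variable {E : Type*} [NormedAddCommGroup E] [InnerProductSpace ℝ E] [CompleteSpace E]
  {f : E → ℝ} {f' : E → E}

theorem HasGradientAt.hasDerivAt_comp_line {x d : E} {s : ℝ}
    (hf : HasGradientAt f (f' (x + s • d)) (x + s • d)) :
    HasDerivAt (fun s : ℝ ↦ f (x + s • d)) ⟪f' (x + s • d), d⟫ s := by
  have hline : HasDerivAt (fun s : ℝ ↦ x + s • d) d s := by
    simpa using ((hasDerivAt_id s).smul_const d).const_add x
  exact (hasGradientAt_iff_hasFDerivAt.mp hf).comp_hasDerivAt s hline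

theorem strictConvexOn_univ_of_inner_gradient_sub_pos (hf : ∀ u, HasGradientAt f (f' u) u)
    (hmono : ∀ u v, u ≠ v → 0 < ⟪f' u - f' v, u - v⟫) : StrictConvexOn ℝ univ f := by
  refine ⟨convex_univ, fun x _ y _ hxy a b ha hb hab ↦ ?_⟩
  set d := y - x
  set φ : ℝ → ℝ := fun s ↦ f (x + s • d)
  have hφ' : ∀ s, HasDerivAt φ ⟪f' (x + s • d), d⟫ s := fun s ↦ (hf _).hasDerivAt_comp_line
  have hd : d ≠ 0 := sub_ne_zero.mpr hxy.symm
  have hφ'_mono : StrictMono (deriv φ) := by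
    intro s t hst
    rw [(hφ' s).deriv, (hφ' t).deriv, ← sub_pos, ← inner_sub_left]
    have hpos := hmono (x + t • d) (x + s • d) <| by
      rw [Ne, add_right_inj]; exact fun h ↦ hst.ne' (smul_left_injective ℝ hd h)
    rw [show x + t • d - (x + s • d) = (t - s) • d by module, real_inner_smul_right] at hpos
    exact pos_of_mul_pos_right hpos (sub_pos.mpr hst).le
  have hφ_conv : StrictConvexOn ℝ univ φ :=
    hφ'_mono.strictConvexOn_univ_of_deriv <|
      continuous_iff_continuousAt.mpr fun s ↦ (hφ' s).continuousAt
  calc f (a • x + b • y) = φ (a • 0 + b • 1) := by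
        simp only [φ, d, smul_eq_mul, mul_one, eq_sub_of_add_eq hab]
        congr 1; module
    _ < a • φ 0 + b • φ 1 := hφ_conv.2 (mem_univ 0) (mem_univ 1) zero_ne_one ha hb hab
    _ = a • f x + b • f y := by simp only [φ, d, zero_smul, add_zero, one_smul, add_sub_cancel]

end Gradient

theorem convex_setOf_forall_inner_le {E ι : Type*} [NormedAddCommGroup E] [InnerProductSpace ℝ E]
    (a : ι → E) (b : ι → ℝ) : Convex ℝ {x | ∀ j, ⟪a j, x⟫ ≤ b j} := by
  rw [ofPred_forall]
  exact convex_iInter fun j ↦ convex_halfSpace_le (innerₛₗ ℝ (a j)).isLinear (b j)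

theorem StrictConvexOn.apply_eq_of_isMinOn_comp {E F : Type*} [AddCommGroup E] [Module ℝ E]
    [AddCommGroup F] [Module ℝ F] {g : F → ℝ} (hg : StrictConvexOn ℝ univ g) (A : E →ₗ[ℝ] F)
    {Q : Set E} (hQ : Convex ℝ Q) {x y : E} (hx : IsMinOn (g ∘ A) Q x) (hy : IsMinOn (g ∘ A) Q y)
    (hxQ : x ∈ Q) (hyQ : y ∈ Q) : A x = A y := by
  have hmin : ∀ {z}, IsMinOn (g ∘ A) Q z → IsMinOn g (A '' Q) (A z) := by
    rintro z hz _ ⟨w, hw, rfl⟩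
    exact hz hw
  exact (hg.subset (subset_univ _) (hQ.linear_image A)).eq_of_isMinOn (hmin hx) (hmin hy)
    (mem_image_of_mem A hxQ) (mem_image_of_mem A hyQ)

theorem stmt_11 {n m k : ℕ} (μ : ℝ) (hμ : 0 < μ)
    (g : Euc m → ℝ) (g' : Euc m → Euc m)
    (hgrad : ∀ u, HasGradientAt g (g' u) u)
    (hSC : ∀ u v, ⟪g' u - g' v, u - v⟫ ≥ μ * ‖u - v‖ ^ 2)
    (A : Euc n →L[ℝ] Euc m)
    (a : Fin k → Euc n) (b : Fin k → ℝ)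
    (Q : Set (Euc n)) (hQ : Q = {x | ∀ j, ⟪a j, x⟫ ≤ b j})
    (X : Set (Euc n)) (hX : X = {x ∈ Q | ∀ y ∈ Q, g (A x) ≤ g (A y)})
    (hne : X.Nonempty) :
    ∃! t : Euc m, (∀ x ∈ X, A x = t) ∧ X = {x | A x = t} ∩ Q := by
  have hg : StrictConvexOn ℝ univ g := strictConvexOn_univ_of_inner_gradient_sub_pos hgrad
    fun u v huv ↦ (hSC u v).trans_lt' (by have := norm_pos_iff.mpr (sub_ne_zero.mpr huv); positivity)
  have hQconv : Convex ℝ Q := hQ ▸ convex_setOf_forall_inner_le a b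
  have hmemX : ∀ x, x ∈ X ↔ x ∈ Q ∧ IsMinOn (g ∘ A) Q x := fun x ↦ by rw [hX]; rfl
  obtain ⟨x₀, hx₀⟩ := hne
  obtain ⟨hx₀Q, hx₀min⟩ := (hmemX x₀).1 hx₀
  have hconst : ∀ x ∈ X, A x = A x₀ := by
    intro x hx
    obtain ⟨hxQ, hxmin⟩ := (hmemX x).1 hx
    exact hg.apply_eq_of_isMinOn_comp A.toLinearMap hQconv hxmin hx₀min hxQ hx₀Q
  refine ⟨A x₀, ⟨hconst, ?_⟩, fun t ht ↦ (ht.1 x₀ hx₀).symm⟩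
  ext x
  refine ⟨fun hx ↦ ⟨hconst x hx, ((hmemX x).1 hx).1⟩, fun ⟨hAx, hxQ⟩ ↦ (hmemX x).2 ⟨hxQ, ?_⟩⟩
  intro y hy
  show g (A x) ≤ g (A y)
  rw [show A x = A x₀ from hAx]
  exact hx₀min hy
end

section
/- Consider minimizing f(x) = g(Ex) over the polyhedron Q = {x : Ax ≤ b}, where g is μ-strongly convex with L-Lipschitz gradient and 𝒳 = argmin_{x∈Q} f is nonempty. Then there exists a constant C₂ > 0 (depending on E, A, and μ) such that the quadratic growth property holds on Q: f(y) ≥ f* + C₂·d²(y, 𝒳) for all y ∈ Q. -/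
/-!
Strong convexity of `g` gives `g (A y) ≥ f* + μ/2 ‖A y - A x*‖²` on `Q` (first-order optimality
kills the linear term), so all minimizers share the image `t* = A x*` and the solution set is the
polyhedron `Q ∩ A⁻¹{t*}`. Hoffman's error bound `d(y, 𝒳) ≤ θ ‖A y - t*‖` for `y ∈ Q` then turns
this into quadratic growth in `d(y, 𝒳)`.

Hoffman's bound: if `p` is the projection of `y` onto a polyhedron, `y - p` lies in the normal
cone at `p`, which by Farkas' lemma is spanned by the active constraint normals. A conic
Carathéodory argument writes `y - p` with coefficients bounded by `κ ‖y - p‖`, `κ` depending only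
on the constraints, and pairing with `y - p` bounds `‖y - p‖` by `κ` times the constraint violation.
-/

open RealInnerProductSpace Metric Set Filter
open Topology

section ConicSpan

variable {ι E : Type*} [NormedAddCommGroup E] [NormedSpace ℝ E] (w : ι → E)

def conicSpan (s : Finset ι) : Set E :=
  {v | ∃ c : ι → ℝ, (∀ i ∈ s, 0 ≤ c i) ∧ ∑ i ∈ s, c i • w i = v}

variable {w}

theorem LinearIndepOn.exists_abs_le_mul_norm_sum {s : Finset ι}
    (hs : LinearIndepOn ℝ w (s : Set ι)) :
    ∃ C, ∀ c : ι → ℝ, ∀ i ∈ s, |c i| ≤ C * ‖∑ j ∈ s, c j • w j‖ := by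
  set Φ := Fintype.linearCombination ℝ (fun j : s => w j)
  obtain ⟨K, -, hK⟩ := Φ.injective_iff_antilipschitz.mp
    (linearIndependent_iff_injective_fintypeLinearCombination.mp hs)
  refine ⟨K, fun c i hi => ?_⟩
  calc |c i| = ‖(fun j : s => c j) ⟨i, hi⟩‖ := rfl
    _ ≤ ‖fun j : s => c j‖ := norm_le_pi_norm (fun j : s => c j) ⟨i, hi⟩
    _ ≤ K * ‖Φ fun j => c j‖ := ZeroHomClass.bound_of_antilipschitz Φ hK _
    _ = K * ‖∑ j ∈ s, c j • w j‖ := by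
      rw [Fintype.linearCombination_apply, Finset.sum_coe_sort s fun j => c j • w j]

theorem exists_mem_conicSpan_erase [DecidableEq ι] {s : Finset ι} {v : E}
    (hs : ¬LinearIndepOn ℝ w (s : Set ι)) (hv : v ∈ conicSpan w s) :
    ∃ i ∈ s, v ∈ conicSpan w (s.erase i) := by
  obtain ⟨c, hc, rfl⟩ := hv
  obtain ⟨g, hg, j, hj, hgj⟩ : ∃ g : ι → ℝ, ∑ i ∈ s, g i • w i = 0 ∧ ∃ j ∈ s, 0 < g j := by
    obtain ⟨g, hg, j, hj, hgj⟩ := not_linearIndepOn_finset_iff.mp hs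
    rcases hgj.lt_or_gt with hneg | hpos
    · exact ⟨-g, by simp [neg_smul, hg], j, hj, by simpa using hneg⟩
    · exact ⟨g, hg, j, hj, hpos⟩
  -- Move along the relation `g` until the first coefficient of `c` hits zero.
  obtain ⟨i, hi, hmin⟩ := Finset.exists_min_image (s.filter (0 < g ·)) (fun i => c i / g i)
    ⟨j, Finset.mem_filter.mpr ⟨hj, hgj⟩⟩
  obtain ⟨his, hgi⟩ := Finset.mem_filter.mp hi
  set r := c i / g i
  have hr : 0 ≤ r := div_nonneg (hc i his) hgi.le
  have hci : c i - r * g i = 0 := by simp [r, hgi.ne']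
  refine ⟨i, his, fun l => c l - r * g l, fun l hl => ?_, ?_⟩
  · have hls := Finset.mem_of_mem_erase hl
    rcases le_or_gt (g l) 0 with hgl | hgl
    · nlinarith [hc l hls]
    · have := hmin l (Finset.mem_filter.mpr ⟨hls, hgl⟩)
      rw [le_div_iff₀ hgl] at this
      linarith
  · rw [Finset.sum_erase s (by simp only [hci, zero_smul])]
    simp only [sub_smul, mul_smul, Finset.sum_sub_distrib, ← Finset.smul_sum, hg, smul_zero,
      sub_zero]

theorem exists_coeff_bound_conicSpan [DecidableEq ι] (s : Finset ι) :
    ∃ κ, 0 ≤ κ ∧ ∀ v ∈ conicSpan w s, ∃ d : ι → ℝ, (∀ i, 0 ≤ d i ∧ d i ≤ κ * ‖v‖) ∧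
      (∀ i ∉ s, d i = 0) ∧ ∑ i ∈ s, d i • w i = v := by
  induction s using Finset.strongInduction with
  | H s ih =>
  by_cases hs : LinearIndepOn ℝ w (s : Set ι)
  · obtain ⟨C, hC⟩ := hs.exists_abs_le_mul_norm_sum
    refine ⟨max C 0, le_max_right _ _, ?_⟩
    rintro v ⟨c, hc, rfl⟩
    refine ⟨fun i => if i ∈ s then c i else 0, fun i => ?_, fun i hi => if_neg hi,
      Finset.sum_congr rfl fun i hi => by simp only [if_pos hi]⟩
    by_cases hi : i ∈ s
    · simp only [if_pos hi]
      exact ⟨hc i hi, (le_abs_self _).trans ((hC c i hi).trans (by gcongr; exact le_max_left _ _))⟩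
    · simp only [if_neg hi]
      exact ⟨le_rfl, by positivity⟩
  · choose! κ hκ0 hκ using fun i (hi : i ∈ s) => ih (s.erase i) (Finset.erase_ssubset hi)
    refine ⟨∑ i ∈ s, κ i, Finset.sum_nonneg hκ0, fun v hv => ?_⟩
    obtain ⟨i, hi, hvi⟩ := exists_mem_conicSpan_erase hs hv
    obtain ⟨d, hd, hds, hdv⟩ := hκ i hi v hvi
    have hdi : d i = 0 := hds i (Finset.notMem_erase i s)
    refine ⟨d, fun l => ⟨(hd l).1, (hd l).2.trans ?_⟩, fun l hl => hds l (fun h => hl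
      (Finset.mem_of_mem_erase h)), ?_⟩
    · gcongr
      exact Finset.single_le_sum hκ0 hi
    · rwa [← Finset.sum_erase s (by rw [hdi, zero_smul])]

theorem convex_conicSpan (s : Finset ι) : Convex ℝ (conicSpan w s) := by
  rintro _ ⟨c, hc, rfl⟩ _ ⟨c', hc', rfl⟩ a b ha hb -
  refine ⟨fun i => a * c i + b * c' i, fun i hi => ?_, ?_⟩
  · have := hc i hi
    have := hc' i hi
    positivity
  · simp only [add_smul, mul_smul, Finset.sum_add_distrib, Finset.smul_sum]

theorem smul_mem_conicSpan [DecidableEq ι] {s : Finset ι} {i : ι} (hi : i ∈ s)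
    {t : ℝ} (ht : 0 ≤ t) : t • w i ∈ conicSpan w s :=
  ⟨Pi.single i t, fun j _ => by by_cases h : j = i <;> simp [h, ht],
    by rw [Finset.sum_eq_single_of_mem i hi fun j _ hj => by simp [hj], Pi.single_eq_same]⟩

theorem isClosed_conicSpan [DecidableEq ι] (s : Finset ι) : IsClosed (conicSpan w s) := by
  obtain ⟨κ, hκ0, hκ⟩ := exists_coeff_bound_conicSpan (w := w) s
  refine isClosed_of_closure_subset fun v hv => ?_
  obtain ⟨u, hu, hlim⟩ := mem_closure_iff_seq_limit.mp hv
  -- Representations of points of norm `< ‖v‖ + 1` have coefficients in a fixed compact box.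
  set K := (fun d => ∑ i ∈ s, d i • w i) '' univ.pi fun _ => Icc 0 (κ * (‖v‖ + 1))
  have hK : IsCompact K := (isCompact_univ_pi fun _ => isCompact_Icc).image (by fun_prop)
  have hev : ∀ᶠ n in atTop, u n ∈ K := by
    filter_upwards [(tendsto_norm.comp hlim).eventually (gt_mem_nhds (lt_add_one ‖v‖))]
      with n hn
    obtain ⟨d, hd, -, hdu⟩ := hκ _ (hu n)
    exact ⟨d, fun i _ => ⟨(hd i).1, (hd i).2.trans (by gcongr; exact hn.le)⟩, hdu⟩
  obtain ⟨d, hd, rfl⟩ := hK.isClosed.mem_of_tendsto hlim hev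
  exact ⟨d, fun i _ => (hd i trivial).1, rfl⟩

end ConicSpan

section Polyhedron

variable {ι E : Type*} [NormedAddCommGroup E] [InnerProductSpace ℝ E]

/-- Farkas' lemma. -/
theorem mem_conicSpan_of_forall_inner_nonpos [CompleteSpace E] [DecidableEq ι] {w : ι → E}
    {s : Finset ι} {v : E} (h : ∀ x, (∀ i ∈ s, ⟪w i, x⟫ ≤ 0) → ⟪v, x⟫ ≤ 0) :
    v ∈ conicSpan w s := by
  by_contra hv
  obtain ⟨f, u, hf, hfv⟩ :=
    geometric_hahn_banach_closed_point (convex_conicSpan s) (isClosed_conicSpan s) hv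
  have hu : 0 < u := by simpa using hf 0 ⟨0, by simp, by simp⟩
  have hfw : ∀ i ∈ s, f (w i) ≤ 0 := by
    intro i hi
    by_contra! hpos
    have := hf _ (smul_mem_conicSpan hi (div_nonneg hu.le hpos.le))
    rw [map_smul, smul_eq_mul, div_mul_cancel₀ _ hpos.ne'] at this
    exact lt_irrefl _ this
  set x := (InnerProductSpace.toDual ℝ E).symm f
  have hx : ∀ z, ⟪x, z⟫ = f z := fun z => InnerProductSpace.toDual_symm_apply
  have hvx := h x fun i hi => by rw [real_inner_comm, hx]; exact hfw i hi
  rw [real_inner_comm, hx] at hvx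
  linarith

def polyhedron (w : ι → E) (β : ι → ℝ) : Set E := {x | ∀ i, ⟪w i, x⟫ ≤ β i}

theorem isClosed_polyhedron (w : ι → E) (β : ι → ℝ) : IsClosed (polyhedron w β) := by
  simpa only [polyhedron, Set.ofPred_forall] using
    isClosed_iInter fun i => isClosed_le (continuous_const.inner continuous_id) continuous_const

theorem convex_polyhedron (w : ι → E) (β : ι → ℝ) : Convex ℝ (polyhedron w β) := by
  simpa only [polyhedron, Set.ofPred_forall] using convex_iInter fun i =>
    convex_halfSpace_le ⟨inner_add_right (w i), fun c x => real_inner_smul_right (w i) x c⟩ (β i)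

theorem mem_conicSpan_active_of_forall_inner_sub_nonpos [Fintype ι] [CompleteSpace E]
    [DecidableEq ι] {w : ι → E} {β : ι → ℝ} {p v : E} (hp : p ∈ polyhedron w β)
    (hv : ∀ x ∈ polyhedron w β, ⟪v, x - p⟫ ≤ 0) :
    v ∈ conicSpan w {i | ⟪w i, p⟫ = β i} := by
  refine mem_conicSpan_of_forall_inner_nonpos fun h hh => ?_
  -- `h` is a feasible direction at `p`: only the active constraints restrict small steps.
  have hstep : ∀ᶠ ε in 𝓝[>] (0 : ℝ), p + ε • h ∈ polyhedron w β := by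
    refine eventually_all.2 fun i => ?_
    rcases (hp i).eq_or_lt with hi | hi
    · filter_upwards [self_mem_nhdsWithin] with ε (hε : 0 < ε)
      have := hh i (by simpa using hi)
      rw [inner_add_right, real_inner_smul_right]
      nlinarith
    · have hc : ContinuousAt (fun ε : ℝ => ⟪w i, p + ε • h⟫) 0 := by fun_prop
      filter_upwards [nhdsWithin_le_nhds (hc.eventually (gt_mem_nhds (by simpa using hi)))]
        with ε hε using hε.le
  obtain ⟨ε, hεP, hε⟩ := (hstep.and self_mem_nhdsWithin).exists
  have := hv _ hεP
  rw [add_sub_cancel_left, real_inner_smul_right] at this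
  exact nonpos_of_mul_nonpos_right this hε

end Polyhedron

section Hoffman

variable {ι E F : Type*} [Fintype ι] [NormedAddCommGroup E] [InnerProductSpace ℝ E]
  [FiniteDimensional ℝ E] [NormedAddCommGroup F] [InnerProductSpace ℝ F] [FiniteDimensional ℝ F]

/-- Hoffman's error bound. -/
theorem exists_infDist_polyhedron_le (w : ι → E) (β : ι → ℝ)
    (hne : (polyhedron w β).Nonempty) :
    ∃ θ, 0 < θ ∧ ∀ y, infDist y (polyhedron w β) ≤ θ * ∑ i, max (⟪w i, y⟫ - β i) 0 := by
  classical
  choose κ hκ0 hκ using fun s : Finset ι => exists_coeff_bound_conicSpan (w := w) s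
  set θ := ∑ s, κ s + 1
  have hκθ : ∀ s, κ s ≤ θ := fun s => (Finset.single_le_sum (fun s _ => hκ0 s)
    (Finset.mem_univ s)).trans (le_add_of_nonneg_right zero_le_one)
  have hθ : 0 < θ := add_pos_of_nonneg_of_pos (Finset.sum_nonneg fun s _ => hκ0 s) one_pos
  refine ⟨θ, hθ, fun y => ?_⟩
  set P := polyhedron w β
  set R := ∑ i, max (⟪w i, y⟫ - β i) 0
  obtain ⟨p, hpP, hdist⟩ := (isClosed_polyhedron w β).exists_infDist_eq_dist hne y
  have hnormal : ∀ x ∈ P, ⟪y - p, x - p⟫ ≤ 0 := by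
    refine (norm_eq_iInf_iff_real_inner_le_zero (convex_polyhedron w β) hpP).1 ?_
    rw [← dist_eq_norm, ← hdist, infDist_eq_iInf]
    simp only [dist_eq_norm]
  set J : Finset ι := {i | ⟪w i, p⟫ = β i}
  obtain ⟨d, hd, -, hdv⟩ := hκ J _ (mem_conicSpan_active_of_forall_inner_sub_nonpos hpP hnormal)
  have hterm : ∀ i ∈ J, d i * ⟪w i, y - p⟫ ≤ κ J * ‖y - p‖ * max (⟪w i, y⟫ - β i) 0 := by
    intro i hi
    rw [inner_sub_right, (Finset.mem_filter.mp hi).2]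
    calc d i * (⟪w i, y⟫ - β i) ≤ d i * max (⟪w i, y⟫ - β i) 0 :=
          mul_le_mul_of_nonneg_left (le_max_left _ _) (hd i).1
      _ ≤ κ J * ‖y - p‖ * max (⟪w i, y⟫ - β i) 0 :=
          mul_le_mul_of_nonneg_right (hd i).2 (le_max_right _ _)
  have hsq : ‖y - p‖ ^ 2 ≤ ‖y - p‖ * (θ * R) := calc
    ‖y - p‖ ^ 2 = ∑ i ∈ J, d i * ⟪w i, y - p⟫ := by
      rw [← real_inner_self_eq_norm_sq]
      nth_rw 1 [← hdv]
      simp only [sum_inner, real_inner_smul_left]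
    _ ≤ ∑ i ∈ J, κ J * ‖y - p‖ * max (⟪w i, y⟫ - β i) 0 := Finset.sum_le_sum hterm
    _ ≤ κ J * ‖y - p‖ * R := by
      rw [← Finset.mul_sum]
      exact mul_le_mul_of_nonneg_left
        (Finset.sum_le_sum_of_subset_of_nonneg J.subset_univ fun i _ _ => le_max_right _ _)
        (mul_nonneg (hκ0 J) (norm_nonneg _))
    _ ≤ θ * ‖y - p‖ * R := by gcongr; exact hκθ J
    _ = ‖y - p‖ * (θ * R) := by ring
  rw [hdist, dist_eq_norm]
  rcases (norm_nonneg (y - p)).eq_or_lt with h0 | hpos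
  · rw [← h0]; positivity
  · nlinarith

theorem exists_infDist_polyhedron_inter_le (A : E →L[ℝ] F) (a : ι → E) (b : ι → ℝ) (c : F)
    (hne : (polyhedron a b ∩ A ⁻¹' {c}).Nonempty) :
    ∃ θ, 0 < θ ∧ ∀ y ∈ polyhedron a b,
      infDist y (polyhedron a b ∩ A ⁻¹' {c}) ≤ θ * ‖A y - c‖ := by
  -- Encode `A x = c` as the inequalities `±⟪e r, A x⟫ ≤ ±⟪e r, c⟫` along an orthonormal basis.
  set e := stdOrthonormalBasis ℝ F
  set w := Sum.elim a (Sum.elim (fun r => A.adjoint (e r)) fun r => -A.adjoint (e r))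
  set β := Sum.elim b (Sum.elim (fun r => ⟪e r, c⟫) fun r => -⟪e r, c⟫)
  have hP : polyhedron w β = polyhedron a b ∩ A ⁻¹' {c} := by
    ext x
    simp only [polyhedron, Set.mem_ofPred_eq, Set.mem_inter_iff, Set.mem_preimage,
      Set.mem_singleton_iff, Sum.forall, w, β, Sum.elim_inl, Sum.elim_inr, inner_neg_left,
      ContinuousLinearMap.adjoint_inner_left, neg_le_neg_iff, ← forall_and, ← le_antisymm_iff]
    refine and_congr_right fun _ => ⟨fun h => ?_, fun h r => by rw [h]⟩
    exact InnerProductSpace.ext_inner_left_basis e.toBasis fun r => by simpa using h r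
  obtain ⟨θ, hθ, hbound⟩ := exists_infDist_polyhedron_le w β (hP ▸ hne)
  refine ⟨θ * (Module.finrank ℝ F + 1), by positivity, fun y hy => ?_⟩
  have hres : ∑ i, max (⟪w i, y⟫ - β i) 0 ≤ (Module.finrank ℝ F + 1) * ‖A y - c‖ := by
    have hineq : ∑ j, max (⟪a j, y⟫ - b j) 0 = 0 :=
      Finset.sum_eq_zero fun j _ => max_eq_right (sub_nonpos.2 (hy j))
    have heq : ∀ r, max (⟪e r, A y⟫ - ⟪e r, c⟫) 0 + max (-⟪e r, A y⟫ - -⟪e r, c⟫) 0 ≤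
        ‖A y - c‖ := fun r => by
      rw [neg_sub_neg, ← inner_sub_right, ← inner_sub_right, ← neg_sub (A y), inner_neg_right,
        max_zero_add_max_neg_zero_eq_abs_self]
      simpa [e.norm_eq_one] using abs_real_inner_le_norm (e r) (A y - c)
    simp only [Fintype.sum_sum_type, w, β, Sum.elim_inl, Sum.elim_inr, inner_neg_left,
      ContinuousLinearMap.adjoint_inner_left, hineq, zero_add, ← Finset.sum_add_distrib]
    calc _ ≤ ∑ _r, ‖A y - c‖ := Finset.sum_le_sum fun r _ => heq r
      _ ≤ _ := by
        simp only [Finset.sum_const, Finset.card_univ, Fintype.card_fin, nsmul_eq_mul]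
        gcongr
        linarith
  rw [← hP]
  exact (hbound y).trans (by rw [mul_assoc]; gcongr)

end Hoffman

section StrongConvexity

variable {E F : Type*} [NormedAddCommGroup E] [NormedSpace ℝ E] [NormedAddCommGroup F]
  [InnerProductSpace ℝ F] [CompleteSpace F] {g : F → ℝ} {g' : F → F} {μ : ℝ}

theorem add_inner_add_sq_le_of_strongly_monotone_gradient
    (hgrad : ∀ u, HasGradientAt g (g' u) u) (hSC : ∀ u v, ⟪g' u - g' v, u - v⟫ ≥ μ * ‖u - v‖ ^ 2)
    (u v : F) :
    g v + ⟪g' v, u - v⟫ + μ / 2 * ‖u - v‖ ^ 2 ≤ g u := by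
  set d := u - v
  set φ : ℝ → ℝ := fun t => g (v + t • d) - t * ⟪g' v, d⟫ - μ / 2 * t ^ 2 * ‖d‖ ^ 2
  have hφ : ∀ t, HasDerivAt φ (⟪g' (v + t • d) - g' v, d⟫ - μ * t * ‖d‖ ^ 2) t := fun t => by
    have hline := ((hasDerivAt_id t).smul_const d).const_add v
    refine ((((hgrad _).hasFDerivAt.comp_hasDerivAt t hline).sub
      ((hasDerivAt_id t).mul_const ⟪g' v, d⟫)).sub
      (((hasDerivAt_pow 2 t).const_mul (μ / 2)).mul_const (‖d‖ ^ 2))).congr_deriv ?_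
    simp only [InnerProductSpace.toDual_apply_apply, inner_sub_left, one_smul, id, one_mul]
    ring
  have hmono : MonotoneOn φ (Icc 0 1) := by
    refine monotoneOn_of_hasDerivWithinAt_nonneg (convex_Icc 0 1)
      (HasDerivAt.continuousOn fun t _ => hφ t) (fun t _ => (hφ t).hasDerivWithinAt) ?_
    rintro t ht
    rw [interior_Icc] at ht
    have := hSC (v + t • d) v
    rw [add_sub_cancel_left, real_inner_smul_right, norm_smul, mul_pow, Real.norm_eq_abs,
      sq_abs] at this
    nlinarith [ht.1]
  have := hmono (by simp) (by simp) zero_le_one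
  norm_num [φ, d] at this
  linarith

theorem add_sq_le_of_isMinOn (hgrad : ∀ u, HasGradientAt g (g' u) u)
    (hSC : ∀ u v, ⟪g' u - g' v, u - v⟫ ≥ μ * ‖u - v‖ ^ 2) {S : Set F} (hS : Convex ℝ S)
    {u₀ u : F} (hmin : IsMinOn g S u₀) (hu₀ : u₀ ∈ S) (hu : u ∈ S) :
    g u₀ + μ / 2 * ‖u - u₀‖ ^ 2 ≤ g u := by
  have hfirst : 0 ≤ ⟪g' u₀, u - u₀⟫ := by
    simpa using hmin.localize.hasFDerivWithinAt_nonneg (hgrad u₀).hasFDerivAt.hasFDerivWithinAt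
      (sub_mem_posTangentConeAt_of_segment_subset (hS.segment_subset hu₀ hu))
  linarith [add_inner_add_sq_le_of_strongly_monotone_gradient hgrad hSC u u₀]

theorem add_sq_norm_map_sub_le_of_forall_le (hgrad : ∀ u, HasGradientAt g (g' u) u)
    (hSC : ∀ u v, ⟪g' u - g' v, u - v⟫ ≥ μ * ‖u - v‖ ^ 2) (A : E →L[ℝ] F) {S : Set E}
    (hS : Convex ℝ S) {x₀ y : E} (hx₀ : x₀ ∈ S) (hmin : ∀ y ∈ S, g (A x₀) ≤ g (A y))
    (hy : y ∈ S) : g (A x₀) + μ / 2 * ‖A y - A x₀‖ ^ 2 ≤ g (A y) :=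
  add_sq_le_of_isMinOn hgrad hSC (hS.linear_image A.toLinearMap)
    (isMinOn_iff.2 (forall_mem_image.2 hmin)) (mem_image_of_mem A hx₀)
    (mem_image_of_mem A hy)

theorem setOf_forall_le_eq_inter_preimage (hμ : 0 < μ) (hgrad : ∀ u, HasGradientAt g (g' u) u)
    (hSC : ∀ u v, ⟪g' u - g' v, u - v⟫ ≥ μ * ‖u - v‖ ^ 2) (A : E →L[ℝ] F) {S : Set E}
    (hS : Convex ℝ S) {x₀ : E} (hx₀ : x₀ ∈ S) (hmin : ∀ y ∈ S, g (A x₀) ≤ g (A y)) :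
    {x ∈ S | ∀ y ∈ S, g (A x) ≤ g (A y)} = S ∩ A ⁻¹' {A x₀} := by
  ext x
  refine ⟨fun ⟨hx, hxmin⟩ => ⟨hx, ?_⟩, fun ⟨hx, hAx⟩ => ⟨hx, fun y hy => ?_⟩⟩
  · have := add_sq_norm_map_sub_le_of_forall_le hgrad hSC A hS hx₀ hmin hx
    have := hxmin x₀ hx₀
    have : ‖A x - A x₀‖ ^ 2 ≤ 0 := by nlinarith
    simpa [sub_eq_zero] using this
  · rw [show A x = A x₀ from hAx]
    exact hmin y hy

end StrongConvexity

theorem stmt_12_general {n m k : ℕ} (μ L : ℝ) (hμ : 0 < μ)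
    (g : Euc m → ℝ) (g' : Euc m → Euc m)
    (hgrad : ∀ u, HasGradientAt g (g' u) u)
    (hSC : ∀ u v, ⟪g' u - g' v, u - v⟫ ≥ μ * ‖u - v‖ ^ 2)
    (A : Euc n →L[ℝ] Euc m)
    (a : Fin k → Euc n) (b : Fin k → ℝ)
    (Q : Set (Euc n)) (hQ : Q = {x | ∀ j, ⟪a j, x⟫ ≤ b j})
    (X : Set (Euc n)) (hX : X = {x ∈ Q | ∀ y ∈ Q, g (A x) ≤ g (A y)})
    (xs : Euc n) (hxs : xs ∈ X) :
    ∃ C₂ : ℝ, 0 < C₂ ∧ ∀ y ∈ Q,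
      g (A y) ≥ g (A xs) + C₂ * (Metric.infDist y X) ^ 2 := by
  change Q = polyhedron a b at hQ
  subst hQ hX
  obtain ⟨hxsQ, hxsmin⟩ := hxs
  have hQconv := convex_polyhedron a b
  rw [setOf_forall_le_eq_inter_preimage hμ hgrad hSC A hQconv hxsQ hxsmin]
  obtain ⟨θ, hθ, hdist⟩ := exists_infDist_polyhedron_inter_le A a b (A xs) ⟨xs, hxsQ, rfl⟩
  refine ⟨μ / (2 * θ ^ 2), by positivity, fun y hy => ?_⟩
  calc g (A xs) + μ / (2 * θ ^ 2) * infDist y (polyhedron a b ∩ A ⁻¹' {A xs}) ^ 2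
      ≤ g (A xs) + μ / (2 * θ ^ 2) * (θ * ‖A y - A xs‖) ^ 2 := by
        gcongr
        · exact infDist_nonneg
        · exact hdist y hy
    _ = g (A xs) + μ / 2 * ‖A y - A xs‖ ^ 2 := by field_simp
    _ ≤ g (A y) := add_sq_norm_map_sub_le_of_forall_le hgrad hSC A hQconv hxsQ hxsmin hy

theorem stmt_12 {n m k : ℕ} (μ L : ℝ) (hμ : 0 < μ) (hL : 0 < L)
    (g : Euc m → ℝ) (g' : Euc m → Euc m)
    (hgrad : ∀ u, HasGradientAt g (g' u) u)
    (hSC : ∀ u v, ⟪g' u - g' v, u - v⟫ ≥ μ * ‖u - v‖ ^ 2)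
    (hLip : ∀ u v, ‖g' u - g' v‖ ≤ L * ‖u - v‖)
    (A : Euc n →L[ℝ] Euc m)
    (a : Fin k → Euc n) (b : Fin k → ℝ)
    (Q : Set (Euc n)) (hQ : Q = {x | ∀ j, ⟪a j, x⟫ ≤ b j})
    (X : Set (Euc n)) (hX : X = {x ∈ Q | ∀ y ∈ Q, g (A x) ≤ g (A y)})
    (hne : X.Nonempty) (xs : Euc n) (hxs : xs ∈ X) :
    ∃ C₂ : ℝ, 0 < C₂ ∧ ∀ y ∈ Q,
      g (A y) ≥ g (A xs) + C₂ * (Metric.infDist y X) ^ 2 :=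
  stmt_12_general μ L hμ g g' hgrad hSC A a b Q hQ X hX xs hxs
end
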